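/- Let 𝒳 be a finite nonempty set, φ, B : 𝒳 → ℝ, and N, k ≥ 1. For each l ∈ {1,…,k} let w^{(l)} : {1,…,N}^l → ℝ be invariant under permutation of its arguments and vanish unless its arguments are pairwise distinct. For x ∈ 𝒳^N and i ∈ {1,…,N} define the canonical parameter Ψ_i(x) = Σ_{l=1}^{k} Σ_{α_2,…,α_l ∈ {1,…,N}} w^{(l)}(i, α_2, …, α_l) ∏_{j=2}^{l} φ(x_{α_j}). Suppose P is a strictly positive probability mass function on 𝒳^N whose full conditionals are the univariate exponential family distributions P(x_i | x_{−i}) = exp( Ψ_i(x) φ(x_i) + B(x_i) ) / Σ_{y∈𝒳} exp( Ψ_i(x with i-th coordinate y) φ(y) + B(y) ) for every i and every x. Then the joint distribution is uniquely determined and equals the graphical-model exponential family member P(x) = exp( Σ_{l=1}^{k} (1/l) Σ_{α_1,…,α_l ∈ {1,…,N}} w^{(l)}(α_1,…,α_l) ∏_{j=1}^{l} φ(x_{α_j}) + Σ_{i=1}^{N} B(x_i) − A ), where A is the log-normalization constant. -/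

import Mathlib

/-!
Since the weight tensors are symmetric and vanish on tuples with a repeated node, changing the
coordinate `x_i` to `y` changes the joint energy by exactly
`Ψ_i(x) (φ(x_i) - φ(y)) + B(x_i) - B(y)`, and `Ψ_i(x)` does not depend on `x_i`. Comparing with
the prescribed conditional of `x_i` shows that `P / exp(jointEnergy)` is unchanged by altering
one coordinate, hence constant on `𝒳^N`; normalization identifies the constant.
-/

open Real Finset

noncomputable section

/-- Tensor-factorized canonical parameter
`Ψ_i(x) = Σ_{l=1}^{k} Σ_{α_2,…,α_l} w^{(l)}(i, α_2, …, α_l) ∏_{j=2}^{l} φ(x_{α_j})`. -/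
def Psi (X : Type*) (φ : X → ℝ) (N k : ℕ) (w : (l : ℕ) → (Fin l → Fin N) → ℝ)
    (x : Fin N → X) (i : Fin N) : ℝ :=
  ∑ l ∈ Finset.range k, ∑ α : Fin l → Fin N,
    w (l + 1) (Fin.cons i α) * ∏ j, φ (x (α j))

/-- The graphical-model energy
`Σ_{l=1}^{k} (1/l) Σ_{α_1,…,α_l} w^{(l)}(α_1,…,α_l) ∏_{j=1}^{l} φ(x_{α_j}) + Σ_i B(x_i)`. -/
def jointEnergy (X : Type*) (φ B : X → ℝ) (N k : ℕ)
    (w : (l : ℕ) → (Fin l → Fin N) → ℝ) (x : Fin N → X) : ℝ :=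
  (∑ l ∈ Finset.range k, (1 / ((l : ℝ) + 1)) *
      ∑ α : Fin (l + 1) → Fin N, w (l + 1) α * ∏ j, φ (x (α j)))
    + ∑ i, B (x i)

open Function

section Tensors

variable {ι X R : Type*} [DecidableEq ι] [CommRing R] (φ : X → R) {l : ℕ}
  (w : (Fin (l + 1) → ι) → R) (x : ι → X) (i : ι) (y : X)

theorem weight_cons_mul_prod_update (hw : ∀ α, ¬ Injective α → w α = 0) (α : Fin l → ι) :
    w (Fin.cons i α) * ∏ j, φ (update x i y (α j)) = w (Fin.cons i α) * ∏ j, φ (x (α j)) := by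
  by_cases hi : i ∈ Set.range α
  · rw [hw _ fun h => (Fin.cons_injective_iff.1 h).1 hi, zero_mul, zero_mul]
  · congr 1
    exact prod_congr rfl fun j _ => by rw [update_of_ne fun h => hi ⟨j, h⟩]

/-- On injective tuples `i` occurs at most once, and where it does not occur the two products
agree: this lets the energy difference be double-counted over the positions of `i`. -/
theorem card_filter_smul_weight_mul_sub (hw : ∀ α, ¬ Injective α → w α = 0)
    (α : Fin (l + 1) → ι) :
    #{j | α j = i} • (w α * (∏ j, φ (x (α j)) - ∏ j, φ (update x i y (α j))))
      = w α * (∏ j, φ (x (α j)) - ∏ j, φ (update x i y (α j))) := by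
  by_cases hinj : Injective α
  · by_cases hi : ∃ j, α j = i
    · obtain ⟨j₀, hj₀⟩ := hi
      have hcard : #{j | α j = i} = 1 := card_eq_one.2 ⟨j₀, by
        ext j; simpa [← hj₀] using hinj.eq_iff⟩
      rw [hcard, one_smul]
    · simp only [not_exists] at hi
      have hprod : ∏ j, φ (update x i y (α j)) = ∏ j, φ (x (α j)) :=
        prod_congr rfl fun j _ => by rw [update_of_ne (hi j)]
      rw [hprod, sub_self, mul_zero, smul_zero]
  · rw [hw α hinj, zero_mul, smul_zero]

variable [Fintype ι]

theorem sum_ite_apply_eq_sum_cons {M : Type*} [AddCommMonoid M]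
    (f : (Fin (l + 1) → ι) → M) (hf : ∀ (e : Equiv.Perm (Fin (l + 1))) α, f (α ∘ e) = f α)
    (j : Fin (l + 1)) :
    ∑ α : Fin (l + 1) → ι, (if α j = i then f α else 0) = ∑ α : Fin l → ι, f (Fin.cons i α) := by
  calc ∑ α : Fin (l + 1) → ι, (if α j = i then f α else 0)
      = ∑ α : Fin (l + 1) → ι, (if α 0 = i then f α else 0) := by
        refine Fintype.sum_equiv ((Equiv.swap 0 j).arrowCongr (Equiv.refl ι)) _ _ fun α => ?_
        have hα : (Equiv.swap 0 j).arrowCongr (Equiv.refl ι) α = α ∘ Equiv.swap 0 j := by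
          ext; simp [Equiv.arrowCongr_apply]
        rw [hα, comp_apply, Equiv.swap_apply_left, hf]
    _ = ∑ α : Fin l → ι, f (Fin.cons i α) := by
        rw [← (Fin.consEquiv fun _ => ι).sum_comp, Fintype.sum_prod_type, sum_comm]
        simp only [Fin.consEquiv, Equiv.coe_fn_mk, Fin.cons_zero, sum_ite_eq', mem_univ,
          if_true]

theorem sum_card_filter_smul_eq_sum_cons {M : Type*} [AddCommMonoid M]
    (f : (Fin (l + 1) → ι) → M) (hf : ∀ (e : Equiv.Perm (Fin (l + 1))) α, f (α ∘ e) = f α) :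
    ∑ α : Fin (l + 1) → ι, #{j | α j = i} • f α = (l + 1) • ∑ α : Fin l → ι, f (Fin.cons i α) := by
  simp_rw [← sum_const, sum_filter]
  rw [sum_comm]
  simp only [sum_ite_apply_eq_sum_cons i f hf, sum_const, card_univ, Fintype.card_fin]

theorem sum_weight_mul_prod_sub_update
    (hsym : ∀ (e : Equiv.Perm (Fin (l + 1))) α, w (α ∘ e) = w α)
    (hw : ∀ α, ¬ Injective α → w α = 0) :
    ∑ α : Fin (l + 1) → ι, w α * ∏ j, φ (x (α j))
        - ∑ α : Fin (l + 1) → ι, w α * ∏ j, φ (update x i y (α j))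
      = ((l : R) + 1) *
          ((φ (x i) - φ y) * ∑ α : Fin l → ι, w (Fin.cons i α) * ∏ j, φ (x (α j))) := by
  set f : (Fin (l + 1) → ι) → R :=
    fun α => w α * (∏ j, φ (x (α j)) - ∏ j, φ (update x i y (α j))) with hf_def
  have hf_perm : ∀ (e : Equiv.Perm (Fin (l + 1))) α, f (α ∘ e) = f α := fun e α => by
    simp only [hf_def, hsym, comp_apply, Equiv.prod_comp e fun j => φ (x (α j)),
      Equiv.prod_comp e fun j => φ (update x i y (α j))]
  have hf_cons : ∀ α : Fin l → ι, f (Fin.cons i α)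
      = (φ (x i) - φ y) * (w (Fin.cons i α) * ∏ j, φ (x (α j))) := fun α => by
    simp only [hf_def, Fin.prod_univ_succ, Fin.cons_zero, Fin.cons_succ, update_self, mul_sub,
      mul_left_comm (w (Fin.cons i α)) (φ y), weight_cons_mul_prod_update φ w x i y hw]
    ring
  calc _ = ∑ α, f α := by simp only [hf_def, mul_sub, sum_sub_distrib]
    _ = ∑ α, #{j | α j = i} • f α :=
        sum_congr rfl fun α _ => (card_filter_smul_weight_mul_sub φ w x i y hw α).symm
    _ = _ := by
        rw [sum_card_filter_smul_eq_sum_cons i f hf_perm, nsmul_eq_mul, Nat.cast_succ]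
        simp only [hf_cons, ← mul_sum]

end Tensors

section GraphicalModel

variable {X : Type*} (φ B : X → ℝ) {N k : ℕ} (w : (l : ℕ) → (Fin l → Fin N) → ℝ)
  (x : Fin N → X) (i : Fin N) (y : X)

theorem Psi_update_self (hdist : ∀ l, l ≤ k → ∀ α : Fin l → Fin N, ¬ Injective α → w l α = 0) :
    Psi X φ N k w (update x i y) i = Psi X φ N k w x i :=
  sum_congr rfl fun l hl => sum_congr rfl fun α _ =>
    weight_cons_mul_prod_update φ (w (l + 1)) x i y (hdist (l + 1) (mem_range.1 hl)) α

theorem jointEnergy_sub_update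
    (hsym : ∀ l, l ≤ k → ∀ (e : Equiv.Perm (Fin l)) (α : Fin l → Fin N), w l (α ∘ e) = w l α)
    (hdist : ∀ l, l ≤ k → ∀ α : Fin l → Fin N, ¬ Injective α → w l α = 0) :
    jointEnergy X φ B N k w x - jointEnergy X φ B N k w (update x i y)
      = Psi X φ N k w x i * (φ (x i) - φ y) + (B (x i) - B y) := by
  have hB : ∑ t, B (x t) - ∑ t, B (update x i y t) = B (x i) - B y := by
    simp_rw [apply_update (fun _ => B), sum_update_of_mem (mem_univ i),
      ← add_sum_erase univ _ (mem_univ i), sdiff_singleton_eq_erase]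
    ring
  have hlevel : ∀ l ∈ range k, 1 / ((l : ℝ) + 1) *
        (∑ α : Fin (l + 1) → Fin N, w (l + 1) α * ∏ j, φ (x (α j))
          - ∑ α : Fin (l + 1) → Fin N, w (l + 1) α * ∏ j, φ (update x i y (α j)))
      = (∑ α : Fin l → Fin N, w (l + 1) (Fin.cons i α) * ∏ j, φ (x (α j))) * (φ (x i) - φ y) :=
    fun l hl => by
      rw [sum_weight_mul_prod_sub_update φ (w (l + 1)) x i y (hsym (l + 1) (mem_range.1 hl))
        (hdist (l + 1) (mem_range.1 hl))]
      field_simp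
  unfold jointEnergy Psi
  rw [← hB, sum_mul, ← sum_congr rfl hlevel]
  simp only [mul_sub, sum_sub_distrib]
  ring

end GraphicalModel

theorem eq_of_forall_update_eq {ι β : Type*} [Fintype ι] [DecidableEq ι] {α : ι → Type*}
    (f : (∀ i, α i) → β) (hf : ∀ x i y, f (update x i y) = f x) (x z : ∀ i, α i) :
    f x = f z := by
  have key : ∀ s : Finset ι, f (s.piecewise z x) = f x := fun s => by
    induction s using Finset.induction_on with
    | empty => rw [piecewise_empty]
    | insert a s _ ih => rw [piecewise_insert, hf, ih]
  rw [← key univ, piecewise_univ]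

/-- On each fibre `{update x i y}` the conditional pins down `P` up to the factor
`exp (θ x * φ (x i) + B (x i))`, while `E` changes across the fibre by exactly that exponent. -/
theorem div_exp_update_eq_of_conditional {ι X : Type*} [DecidableEq ι] [Fintype X]
    (P E θ : (ι → X) → ℝ) (φ B : X → ℝ) (i : ι) (hpos : ∀ x, 0 < P x)
    (hθ : ∀ x y, θ (update x i y) = θ x)
    (hE : ∀ x y, E x - E (update x i y) = θ x * (φ (x i) - φ y) + (B (x i) - B y))
    (hcond : ∀ x, P x / ∑ y, P (update x i y)
      = exp (θ x * φ (x i) + B (x i)) / ∑ y, exp (θ (update x i y) * φ y + B y))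
    (x : ι → X) (y : X) :
    P (update x i y) / exp (E (update x i y)) = P x / exp (E x) := by
  set S := ∑ z, P (update x i z)
  set T := ∑ z, exp (θ x * φ z + B z)
  have hS : S ≠ 0 := (sum_pos (fun z _ => hpos _) ⟨x i, mem_univ _⟩).ne'
  have hT : T ≠ 0 := (sum_pos (fun z _ => exp_pos _) ⟨x i, mem_univ _⟩).ne'
  have hx : P x * T = exp (θ x * φ (x i) + B (x i)) * S := by
    rw [← div_eq_div_iff hS hT, hcond]; simp only [hθ, T]
  have hx' : P (update x i y) * T = exp (θ x * φ y + B y) * S := by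
    rw [← div_eq_div_iff hS hT]
    simpa only [update_idem, update_self, hθ] using hcond (update x i y)
  have hexp : exp (E x) * exp (θ x * φ y + B y)
      = exp (E (update x i y)) * exp (θ x * φ (x i) + B (x i)) := by
    rw [← exp_add, ← exp_add]; congr 1; linear_combination hE x y
  rw [div_eq_div_iff (exp_ne_zero _) (exp_ne_zero _)]
  refine mul_right_cancel₀ (mul_ne_zero hT (exp_ne_zero (θ x * φ y + B y))) ?_
  linear_combination (exp (E x) * exp (θ x * φ y + B y)) * hx'
    - (exp (E (update x i y)) * exp (θ x * φ y + B y)) * hx + (S * exp (θ x * φ y + B y)) * hexp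

theorem eq_div_sum_of_div_eq {α : Type*} [Fintype α] (P g : α → ℝ) (hg : ∀ z, 0 < g z)
    (hP : ∑ z, P z = 1) (x : α) (hconst : ∀ z, P z / g z = P x / g x) :
    P x = g x / ∑ z, g z := by
  have hsum : ∑ z, g z ≠ 0 := (sum_pos (fun z _ => hg z) ⟨x, mem_univ _⟩).ne'
  have hnorm : P x / g x * ∑ z, g z = 1 := by
    rw [← hP, mul_sum]
    exact sum_congr rfl fun z _ => by rw [← hconst z, div_mul_cancel₀ _ (hg z).ne']
  rw [eq_div_iff hsum, ← div_mul_cancel₀ (P x) (hg x).ne', mul_right_comm, hnorm, one_mul]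

theorem node_conditionals_determine_joint_general
    (X : Type*) [Fintype X]
    (φ B : X → ℝ) (N k : ℕ)
    (w : (l : ℕ) → (Fin l → Fin N) → ℝ)
    (hsym : ∀ l, l ≤ k → ∀ (e : Equiv.Perm (Fin l)) (α : Fin l → Fin N), w l (α ∘ e) = w l α)
    (hdist : ∀ l, l ≤ k → ∀ α : Fin l → Fin N, ¬ Function.Injective α → w l α = 0)
    (P : (Fin N → X) → ℝ)
    (hpos : ∀ x, 0 < P x) (hsum : ∑ x : Fin N → X, P x = 1)
    (hcond : ∀ (i : Fin N) (x : Fin N → X),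
      P x / (∑ y : X, P (Function.update x i y))
        = Real.exp (Psi X φ N k w x i * φ (x i) + B (x i))
          / ∑ y : X, Real.exp (Psi X φ N k w (Function.update x i y) i * φ y + B y)) :
    ∀ x : Fin N → X,
      P x = Real.exp (jointEnergy X φ B N k w x)
        / ∑ y : Fin N → X, Real.exp (jointEnergy X φ B N k w y) := by
  intro x
  have hbalance : ∀ z i y, P (update z i y) / exp (jointEnergy X φ B N k w (update z i y))
      = P z / exp (jointEnergy X φ B N k w z) := fun z i =>
    div_exp_update_eq_of_conditional P (jointEnergy X φ B N k w) (Psi X φ N k w · i) φ B i hpos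
      (Psi_update_self φ w · i · hdist) (jointEnergy_sub_update φ B w · i · hsym hdist)
      (hcond i) z
  exact eq_div_sum_of_div_eq P _ (fun _ => exp_pos _) hsum x fun z =>
    eq_of_forall_update_eq (fun z => P z / exp (jointEnergy X φ B N k w z)) hbalance z x

/-- **Lemma B.1 / Proposition 1 of Yang et al..** If the full conditionals of a
strictly positive pmf on `𝒳^N` are univariate exponential family distributions with
tensor-factorized canonical parameters `Ψ_i` built from symmetric weight tensors `w^{(l)}`
vanishing on tuples with repeated arguments, then the joint distribution is uniquely
determined and is the corresponding graphical-model exponential family member. -/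
theorem node_conditionals_determine_joint
    (X : Type*) [Fintype X] [DecidableEq X] [Nonempty X]
    (φ B : X → ℝ) (N k : ℕ) (hN : 1 ≤ N) (hk : 1 ≤ k)
    (w : (l : ℕ) → (Fin l → Fin N) → ℝ)
    (hsym : ∀ l, l ≤ k → ∀ (e : Equiv.Perm (Fin l)) (α : Fin l → Fin N), w l (α ∘ e) = w l α)
    (hdist : ∀ l, l ≤ k → ∀ α : Fin l → Fin N, ¬ Function.Injective α → w l α = 0)
    (P : (Fin N → X) → ℝ)
    (hpos : ∀ x, 0 < P x) (hsum : ∑ x : Fin N → X, P x = 1)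
    (hcond : ∀ (i : Fin N) (x : Fin N → X),
      P x / (∑ y : X, P (Function.update x i y))
        = Real.exp (Psi X φ N k w x i * φ (x i) + B (x i))
          / ∑ y : X, Real.exp (Psi X φ N k w (Function.update x i y) i * φ y + B y)) :
    ∀ x : Fin N → X,
      P x = Real.exp (jointEnergy X φ B N k w x)
        / ∑ y : Fin N → X, Real.exp (jointEnergy X φ B N k w y) :=
  node_conditionals_determine_joint_general X φ B N k w hsym hdist P hpos hsum hcond

end
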